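/- arXiv:2208.03106 — 4 statements merged into one kernel-verified Lean document; each statement's English description precedes it below -/
import Mathlib

section
/- Let H be a Hilbert space and let {R_z} be a family of bounded operators on H indexed by z in a subset Z of the complex numbers, symmetric under conjugation, such that (R_z)* = R_{z̄} for all z and R_z − R_w = (w − z) R_z R_w for all z, w in Z (first resolvent identity). If for some z₀ in Z the operator R_{z₀} is injective, then R_{z₀} is the resolvent at z₀ of a self-adjoint operator; more precisely, the operator A := z₀·1 − R_{z₀}⁻¹ defined on dom(A) = ran(R_{z₀}) is self-adjoint and (−A + z₀)⁻¹ = R_{z₀}. -/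
/-! With `T = R z₀` and `T* = R z̄₀`, the operator is `A = z₀ - T⁻¹` on `ran T`. The resolvent
identity for the pair `(z̄₀, z₀)`, read as `T* - T = (z₀ - z̄₀) T* T`, is exactly the symmetry of
`A`. The identity for `(z₀, z̄₀)`, read as `T - T* = (z̄₀ - z₀) T T*`, gives `ker T* ⊆ ker T = 0`,
so `ran T` is dense, and it shows that `z₀ y - A* y` is a `T`-preimage of every `y ∈ dom A*`;
hence `A* ⊆ A`. -/

open ComplexConjugate
noncomputable section

/-- `Rz` is the resolvent `(-A + z)⁻¹` of the (unbounded) operator `A` at `z`. -/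
def IsResolventAt {H : Type*} [NormedAddCommGroup H] [InnerProductSpace ℂ H] [CompleteSpace H]
    (A : H →ₗ.[ℂ] H) (z : ℂ) (Rz : H →L[ℂ] H) : Prop :=
  (∀ u : H, ∃ hu : Rz u ∈ A.domain, z • Rz u - A ⟨Rz u, hu⟩ = u) ∧
    ∀ x : A.domain, Rz (z • (x : H) - A x) = x

namespace ContinuousLinearMap

variable {𝕜 E F : Type*} [RCLike 𝕜]

theorem injective_of_sub_eq_smul_comp [NormedAddCommGroup E] [NormedSpace 𝕜 E]
    {T S : E →L[𝕜] E} {c : 𝕜} (h : T - S = c • (T ∘L S)) (hT : Function.Injective T) :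
    Function.Injective S := by
  refine (injective_iff_map_eq_zero S).mpr fun x hx => hT ?_
  simpa [hx] using congrArg (fun U : E →L[𝕜] E => U x) h

theorem dense_range_of_injective_adjoint [NormedAddCommGroup E] [InnerProductSpace 𝕜 E]
    [CompleteSpace E] [NormedAddCommGroup F] [InnerProductSpace 𝕜 F] [CompleteSpace F]
    {T : E →L[𝕜] F} (h : Function.Injective T.adjoint) :
    Dense (LinearMap.range (T : E →ₗ[𝕜] F) : Set F) := by
  rw [Submodule.dense_iff_topologicalClosure_eq_top, Submodule.topologicalClosure_eq_top_iff]
  exact (T.orthogonal_range).trans (LinearMap.ker_eq_bot.mpr h)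

end ContinuousLinearMap

namespace LinearPMap

section Algebraic

variable {𝕜 E : Type*} [Field 𝕜] [AddCommGroup E] [Module 𝕜 E]

/-- The operator `z - T⁻¹` on `range T`, whose resolvent at `z` is `T`. -/
def ofResolvent (T : E →ₗ[𝕜] E) (hT : Function.Injective T) (z : 𝕜) : E →ₗ.[𝕜] E :=
  ⟨LinearMap.range T, z • (LinearMap.range T).subtype - (LinearEquiv.ofInjective T hT).symm⟩

variable {T : E →ₗ[𝕜] E} {hT : Function.Injective T} {z : 𝕜}

theorem ofResolvent_domain : (ofResolvent T hT z).domain = LinearMap.range T := rfl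

theorem ofResolvent_apply {x : (ofResolvent T hT z).domain} {u : E} (hx : T u = x) :
    ofResolvent T hT z x = z • T u - u := by
  obtain ⟨_, hu⟩ := x
  subst hx
  have h : (LinearEquiv.ofInjective T hT).symm ⟨T u, hu⟩ = u :=
    (LinearEquiv.ofInjective T hT).symm_apply_apply u
  simp [ofResolvent, h]

theorem le_ofResolvent {f : E →ₗ.[𝕜] E} (hf : ∀ y : f.domain, T (z • (y : E) - f y) = y) :
    f ≤ ofResolvent T hT z := by
  refine le_of_eqLocus_ge fun y hy => ?_
  have hyT := hf ⟨y, hy⟩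
  refine ⟨hy, ⟨_, hyT⟩, ?_⟩
  rw [ofResolvent_apply hyT, hyT]
  abel

end Algebraic

section Hilbert

variable {H : Type*} [NormedAddCommGroup H] [InnerProductSpace ℂ H] [CompleteSpace H]
  {T : H →L[ℂ] H} {hT : Function.Injective T} {z : ℂ}

theorem isResolventAt_ofResolvent : IsResolventAt (ofResolvent (T : H →ₗ[ℂ] H) hT z) z T := by
  refine ⟨fun u => ⟨⟨u, rfl⟩, ?_⟩, ?_⟩
  · rw [ofResolvent_apply rfl, ContinuousLinearMap.coe_coe, sub_sub_cancel]
  · rintro ⟨_, u, rfl⟩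
    rw [ofResolvent_apply rfl]
    simp only [ContinuousLinearMap.coe_coe, sub_sub_cancel]

theorem isFormalAdjoint_ofResolvent (h : T.adjoint - T = (z - conj z) • (T.adjoint ∘L T)) :
    (ofResolvent (T : H →ₗ[ℂ] H) hT z).IsFormalAdjoint (ofResolvent (T : H →ₗ[ℂ] H) hT z) := by
  rintro ⟨_, u, rfl⟩ ⟨_, v, rfl⟩
  have hinner : inner ℂ u (T v) - inner ℂ (T u) v = (conj z - z) * inner ℂ (T u) (T v) := by
    have := congrArg (fun S : H →L[ℂ] H => inner ℂ (S u) v) h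
    simp only [_root_.sub_apply, _root_.smul_apply, ContinuousLinearMap.comp_apply,
      inner_sub_left, inner_smul_left, ContinuousLinearMap.adjoint_inner_left, _root_.map_sub,
      Complex.conj_conj] at this
    linear_combination this
  rw [ofResolvent_apply rfl, ofResolvent_apply rfl]
  simp only [ContinuousLinearMap.coe_coe, inner_sub_left, inner_sub_right,
    inner_smul_left, inner_smul_right]
  linear_combination -hinner

theorem adjoint_ofResolvent_le (hdense : Dense (LinearMap.range (T : H →ₗ[ℂ] H) : Set H))
    (h : T - T.adjoint = (conj z - z) • (T ∘L T.adjoint)) :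
    (ofResolvent (T : H →ₗ[ℂ] H) hT z).adjoint ≤ ofResolvent (T : H →ₗ[ℂ] H) hT z := by
  refine le_ofResolvent fun y => ?_
  set w := (ofResolvent (T : H →ₗ[ℂ] H) hT z).adjoint y
  have hw := adjoint_isFormalAdjoint (T := ofResolvent (T : H →ₗ[ℂ] H) hT z) hdense y
  have hTadj : T.adjoint (conj z • (y : H) - w) = y := by
    refine ext_inner_right ℂ fun u => ?_
    have hwu := hw ⟨T u, u, rfl⟩
    rw [ofResolvent_apply rfl] at hwu
    change inner ℂ w (T u) = inner ℂ (y : H) (z • T u - u) at hwu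
    rw [ContinuousLinearMap.adjoint_inner_left, inner_sub_left, inner_smul_left, Complex.conj_conj,
      hwu, inner_sub_right, inner_smul_right]
    ring
  have hy := congrArg (fun U : H →L[ℂ] H => U (conj z • (y : H) - w)) h
  simp only [_root_.sub_apply, _root_.smul_apply, ContinuousLinearMap.comp_apply, hTadj] at hy
  calc T (z • (y : H) - w) = T (conj z • (y : H) - w) + (z - conj z) • T y := by
        rw [← _root_.map_smul, ← _root_.map_add]; congr 1; module
    _ = y := by rw [sub_eq_iff_eq_add.mp hy]; module

theorem isSelfAdjoint_ofResolvent (h₁ : T - T.adjoint = (conj z - z) • (T ∘L T.adjoint))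
    (h₂ : T.adjoint - T = (z - conj z) • (T.adjoint ∘L T)) :
    IsSelfAdjoint (ofResolvent (T : H →ₗ[ℂ] H) hT z) := by
  have hdense := ContinuousLinearMap.dense_range_of_injective_adjoint
    (ContinuousLinearMap.injective_of_sub_eq_smul_comp h₁ hT)
  exact le_antisymm (adjoint_ofResolvent_le hdense h₁)
    ((isFormalAdjoint_ofResolvent h₂).le_adjoint hdense)

end Hilbert

end LinearPMap

open LinearPMap

/-- A conjugation-symmetric pseudo-resolvent family which is injective at some
point `z₀` is the resolvent family of a self-adjoint operator at `z₀`; the operator is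
`A = z₀·1 − R_{z₀}⁻¹` with domain `ran (R_{z₀})`. -/
theorem statement_0 {H : Type*} [NormedAddCommGroup H] [InnerProductSpace ℂ H] [CompleteSpace H]
    (Z : Set ℂ) (hZconj : ∀ z ∈ Z, conj z ∈ Z)
    (R : ℂ → H →L[ℂ] H)
    (hadj : ∀ z ∈ Z, (R z).adjoint = R (conj z))
    (hres : ∀ z ∈ Z, ∀ w ∈ Z, R z - R w = (w - z) • ((R z).comp (R w)))
    (z₀ : ℂ) (hz₀ : z₀ ∈ Z) (hinj : Function.Injective (R z₀)) :
    ∃ A : H →ₗ.[ℂ] H, IsSelfAdjoint A ∧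
      A.domain = LinearMap.range ((R z₀ : H →ₗ[ℂ] H)) ∧
      IsResolventAt A z₀ (R z₀) ∧
      ∀ (u : H) (hu : R z₀ u ∈ A.domain), A ⟨R z₀ u, hu⟩ = z₀ • R z₀ u - u := by
  have hz₀' := hZconj z₀ hz₀
  have h₁ := hres z₀ hz₀ _ hz₀'
  have h₂ := hres _ hz₀' z₀ hz₀
  rw [← hadj z₀ hz₀] at h₁ h₂
  exact ⟨ofResolvent (R z₀ : H →ₗ[ℂ] H) hinj z₀, isSelfAdjoint_ofResolvent h₁ h₂,
    ofResolvent_domain, isResolventAt_ofResolvent, fun _ _ => ofResolvent_apply rfl⟩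
end
end

section
/- Let A be a self-adjoint operator on a Hilbert space H with resolvent R_z = (−A+z)⁻¹, and let τ : dom(A) → 𝔥 be a bounded linear map (dom(A) with the graph norm) whose kernel is dense in H. Define G_z := (τ R_{z̄})* : 𝔥* → H for z in the resolvent set of A. Then ran(G_z) ∩ dom(A) = {0}. -/
/-!
For `u` in the kernel of `τ`, the vector `(z̄ - A) u` lies in the kernel of `τ R_{z̄}`. Hence, if
`v = G_z φ` lies in `dom A`, symmetry of `A` gives `⟪(z - A) v, u⟫ = ⟪v, (z̄ - A) u⟫ = 0` on the
dense kernel of `τ`, so `(z - A) v = 0`, and `v = R_z (z - A) v = 0`.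
-/

open ComplexConjugate
noncomputable section

open scoped InnerProductSpace

theorem IsSelfAdjoint.isFormalAdjoint_self {𝕜 E : Type*} [RCLike 𝕜] [NormedAddCommGroup E]
    [InnerProductSpace 𝕜 E] [CompleteSpace E] {A : E →ₗ.[𝕜] E} (hA : IsSelfAdjoint A) :
    A.IsFormalAdjoint A := by
  have h := LinearPMap.adjoint_isFormalAdjoint hA.dense_domain
  rwa [LinearPMap.isSelfAdjoint_def.mp hA] at h

theorem LinearPMap.IsFormalAdjoint.inner_smul_sub_left {𝕜 E : Type*} [RCLike 𝕜]
    [NormedAddCommGroup E] [InnerProductSpace 𝕜 E] {A : E →ₗ.[𝕜] E} (hA : A.IsFormalAdjoint A)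
    (z : 𝕜) (v u : A.domain) :
    ⟪z • (v : E) - A v, (u : E)⟫_𝕜 = ⟪(v : E), conj z • (u : E) - A u⟫_𝕜 := by
  rw [inner_sub_left, inner_smul_left, inner_sub_right, inner_smul_right, hA v u]

section Resolvent

variable {H 𝔥 : Type*} [NormedAddCommGroup H] [InnerProductSpace ℂ H] [CompleteSpace H]
  [NormedAddCommGroup 𝔥] [InnerProductSpace ℂ 𝔥]
  {A : H →ₗ.[ℂ] H} {z : ℂ} {Rz : H →L[ℂ] H}

theorem IsResolventAt.eq_zero_of_smul_sub_eq_zero (hR : IsResolventAt A z Rz) (x : A.domain)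
    (hx : z • (x : H) - A x = 0) : (x : H) = 0 := by
  rw [← hR.2 x, hx, map_zero]

theorem IsResolventAt.apply_smul_sub_eq (hR : IsResolventAt A z Rz) {τ : A.domain →ₗ[ℂ] 𝔥}
    {T : H →L[ℂ] 𝔥} (hT : ∀ (u : H) (hu : Rz u ∈ A.domain), T u = τ ⟨Rz u, hu⟩)
    (x : A.domain) : T (z • (x : H) - A x) = τ x := by
  obtain ⟨hmem, -⟩ := hR.1 (z • (x : H) - A x)
  rw [hT _ hmem]
  exact congrArg τ (Subtype.ext (hR.2 x))

theorem IsResolventAt.smul_sub_adjoint_apply_eq_zero [CompleteSpace 𝔥]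
    (hR : IsResolventAt A (conj z) Rz) (hA : A.IsFormalAdjoint A) {τ : A.domain →ₗ[ℂ] 𝔥}
    (hker : Dense {u : H | ∃ hu : u ∈ A.domain, τ ⟨u, hu⟩ = 0})
    {T : H →L[ℂ] 𝔥} (hT : ∀ (u : H) (hu : Rz u ∈ A.domain), T u = τ ⟨Rz u, hu⟩)
    (φ : 𝔥) (hφ : T.adjoint φ ∈ A.domain) :
    z • T.adjoint φ - A ⟨T.adjoint φ, hφ⟩ = 0 := by
  refine hker.eq_zero_of_inner_left (𝕜 := ℂ) ?_
  rintro u ⟨hu, hτu⟩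
  rw [hA.inner_smul_sub_left z ⟨_, hφ⟩ ⟨u, hu⟩, ContinuousLinearMap.adjoint_inner_left,
    hR.apply_smul_sub_eq hT ⟨u, hu⟩, hτu, inner_zero_right]

end Resolvent

theorem statement_1_general {H 𝔥 : Type*}
    [NormedAddCommGroup H] [InnerProductSpace ℂ H] [CompleteSpace H]
    [NormedAddCommGroup 𝔥] [InnerProductSpace ℂ 𝔥] [CompleteSpace 𝔥]
    (A : H →ₗ.[ℂ] H) (hA : IsSelfAdjoint A)
    (Z : Set ℂ) (R : ℂ → H →L[ℂ] H)
    (hZres : ∀ z ∈ Z, IsResolventAt A z (R z)) (hZconj : ∀ z ∈ Z, conj z ∈ Z)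
    (τ : A.domain →ₗ[ℂ] 𝔥)
    (hker : Dense {u : H | ∃ hu : u ∈ A.domain, τ ⟨u, hu⟩ = 0})
    (T : ℂ → H →L[ℂ] 𝔥)
    (hT : ∀ z ∈ Z, ∀ (u : H) (hu : R z u ∈ A.domain), T z u = τ ⟨R z u, hu⟩)
    (z : ℂ) (hz : z ∈ Z) :
    ∀ φ : 𝔥, (T (conj z)).adjoint φ ∈ A.domain → (T (conj z)).adjoint φ = 0 := by
  intro φ hφ
  have hzc : conj z ∈ Z := hZconj z hz
  exact (hZres z hz).eq_zero_of_smul_sub_eq_zero ⟨_, hφ⟩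
    ((hZres _ hzc).smul_sub_adjoint_apply_eq_zero hA.isFormalAdjoint_self hker
      (hT _ hzc) φ hφ)

/-- Let `A` be self-adjoint with resolvent `R z` (for `z` in the resolvent set
`Z`), and let `τ : dom A → 𝔥` be bounded w.r.t. the graph norm, with dense kernel (as a subset
of `H`).  Let `T z` be the bounded operator `τ ∘ R z : H → 𝔥` and `G z := (T z̄)* = (τ R_{z̄})*`.
Then `ran (G z) ∩ dom A = {0}`. -/
theorem statement_1 {H 𝔥 : Type*}
    [NormedAddCommGroup H] [InnerProductSpace ℂ H] [CompleteSpace H]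
    [NormedAddCommGroup 𝔥] [InnerProductSpace ℂ 𝔥] [CompleteSpace 𝔥]
    (A : H →ₗ.[ℂ] H) (hA : IsSelfAdjoint A)
    (Z : Set ℂ) (R : ℂ → H →L[ℂ] H)
    (hZres : ∀ z ∈ Z, IsResolventAt A z (R z)) (hZconj : ∀ z ∈ Z, conj z ∈ Z)
    (τ : A.domain →ₗ[ℂ] 𝔥)
    (hτbdd : ∃ C : ℝ, ∀ x : A.domain, ‖τ x‖ ≤ C * (‖(x : H)‖ + ‖A x‖))
    (hker : Dense {u : H | ∃ hu : u ∈ A.domain, τ ⟨u, hu⟩ = 0})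
    (T : ℂ → H →L[ℂ] 𝔥)
    (hT : ∀ z ∈ Z, ∀ (u : H) (hu : R z u ∈ A.domain), T z u = τ ⟨R z u, hu⟩)
    (z : ℂ) (hz : z ∈ Z) :
    ∀ φ : 𝔥, (T (conj z)).adjoint φ ∈ A.domain → (T (conj z)).adjoint φ = 0 :=
  statement_1_general A hA Z R hZres hZconj τ hker T hT z hz
end
end

section
/- Abstract boundary conditions: for the self-adjoint operator A_B of the Kreĭn formula and any z ∈ ρ(A_B) ∩ ρ(A), one has dom(A_B) = {u ∈ H : u − G_z ρ_B u ∈ dom(A)} and (−A_B + z)u = (−A + z)(u − G_z ρ_B u). Moreover every u ∈ dom(A_B) satisfies (π₁*B₁⊕B₂) τ u = (1⊕B₀) ρ_B u. -/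
open ComplexConjugate
noncomputable section

/-- The block-diagonal operator `P ⊕ Q` between Hilbertian direct sums. -/
def blockDiag {h1 h2 h1' h2' : Type*}
    [NormedAddCommGroup h1] [InnerProductSpace ℂ h1]
    [NormedAddCommGroup h2] [InnerProductSpace ℂ h2]
    [NormedAddCommGroup h1'] [InnerProductSpace ℂ h1']
    [NormedAddCommGroup h2'] [InnerProductSpace ℂ h2']
    (P : h1 →L[ℂ] h1') (Q : h2 →L[ℂ] h2') :
    WithLp 2 (h1 × h2) →L[ℂ] WithLp 2 (h1' × h2') :=
  ((WithLp.prodContinuousLinearEquiv 2 ℂ h1' h2').symm.toContinuousLinearMap.comp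
      (P.prodMap Q)).comp
    (WithLp.prodContinuousLinearEquiv 2 ℂ h1 h2).toContinuousLinearMap

/-- The pair `(φ₁, φ₂)` as an element of the Hilbertian direct sum. -/
def pairL2 {h1 h2 : Type*}
    [NormedAddCommGroup h1] [InnerProductSpace ℂ h1]
    [NormedAddCommGroup h2] [InnerProductSpace ℂ h2] (φ₁ : h1) (φ₂ : h2) :
    WithLp 2 (h1 × h2) :=
  (WithLp.prodContinuousLinearEquiv 2 ℂ h1 h2).symm (φ₁, φ₂)

/-!
Every `v ∈ dom A_B` is `R_z^B u` with `u = (z - A_B) v`. The range of `τ R_{z̄}` lies in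
`ran τ₁ ⊕ h₂`, on which `π₁ ⊕ 1` is the identity; taking adjoints, `G_z (π₁ ⊕ 1) = G_z`, so
`G_z ρ_B v` is exactly the Kreĭn correction `G_z Λ_z^B G_{z̄}^* u` and `v - G_z ρ_B v = R_z u`,
which lies in `dom A` with `(z - A) R_z u = u`. The boundary condition is
`M_z^B Λ_z^B = B₁ ⊕ B₂` applied to `τ R_z u`, followed by `π₁ ⊕ 1`, which commutes with `1 ⊕ B₀`.
-/

section BlockDiag

variable {h1 h2 h1' h2' : Type*}
    [NormedAddCommGroup h1] [InnerProductSpace ℂ h1]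
    [NormedAddCommGroup h2] [InnerProductSpace ℂ h2]
    [NormedAddCommGroup h1'] [InnerProductSpace ℂ h1']
    [NormedAddCommGroup h2'] [InnerProductSpace ℂ h2']

@[simp]
lemma blockDiag_pairL2 (P : h1 →L[ℂ] h1') (Q : h2 →L[ℂ] h2') (a : h1) (b : h2) :
    blockDiag P Q (pairL2 a b) = pairL2 (P a) (Q b) := rfl

lemma isSelfAdjoint_blockDiag [CompleteSpace h1] [CompleteSpace h2]
    {P : h1 →L[ℂ] h1} {Q : h2 →L[ℂ] h2} (hP : IsSelfAdjoint P) (hQ : IsSelfAdjoint Q) :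
    IsSelfAdjoint (blockDiag P Q) := by
  refine LinearMap.IsSymmetric.isSelfAdjoint fun x y => ?_
  simp only [blockDiag, WithLp.prod_inner_apply]
  exact congrArg₂ (· + ·) (hP.isSymmetric _ _) (hQ.isSymmetric _ _)

lemma blockDiag_boundary_condition {P B₁ : h1 →L[ℂ] h1} {B₀ B₂ : h2 →L[ℂ] h2'}
    {N : WithLp 2 (h1 × h2) →L[ℂ] WithLp 2 (h1 × h2)}
    {Minv : WithLp 2 (h1 × h2') →L[ℂ] WithLp 2 (h1 × h2)}
    (hMinv : (blockDiag 1 B₀ - (blockDiag B₁ B₂).comp N).comp Minv = 1)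
    (t : WithLp 2 (h1 × h2)) :
    blockDiag (P.comp B₁) B₂ (t + N (Minv (blockDiag B₁ B₂ t)))
      = blockDiag 1 B₀ (blockDiag P 1 (Minv (blockDiag B₁ B₂ t))) := by
  set φ := Minv (blockDiag B₁ B₂ t)
  have hφ : blockDiag 1 B₀ φ - blockDiag B₁ B₂ (N φ) = blockDiag B₁ B₂ t :=
    DFunLike.congr_fun hMinv _
  calc blockDiag (P.comp B₁) B₂ (t + N φ)
      = blockDiag P 1 (blockDiag B₁ B₂ t + blockDiag B₁ B₂ (N φ)) := by
        rw [← map_add]; rfl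
    _ = blockDiag P 1 (blockDiag 1 B₀ φ) := by rw [← hφ, sub_add_cancel]
    _ = blockDiag 1 B₀ (blockDiag P 1 φ) := rfl

end BlockDiag

lemma ContinuousLinearMap.adjoint_comp_eq_of_comp_eq {E F : Type*}
    [NormedAddCommGroup E] [InnerProductSpace ℂ E] [CompleteSpace E]
    [NormedAddCommGroup F] [InnerProductSpace ℂ F] [CompleteSpace F]
    {P : F →L[ℂ] F} {T : E →L[ℂ] F} (hP : IsSelfAdjoint P) (hPT : P.comp T = T) :
    T.adjoint.comp P = T.adjoint := by
  rw [← hP.adjoint_eq, ← adjoint_comp, hPT]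

section Resolvent

variable {H : Type*} [NormedAddCommGroup H] [InnerProductSpace ℂ H] [CompleteSpace H]
    {A : H →ₗ.[ℂ] H} {z : ℂ} {R : H →L[ℂ] H}

lemma IsResolventAt.sub_apply_eq (hR : IsResolventAt A z R) (u : H) (hu : R u ∈ A.domain) :
    z • R u - A ⟨R u, hu⟩ = u :=
  (hR.1 u).2

lemma IsResolventAt.exists_eq_apply (hR : IsResolventAt A z R) (v : A.domain) :
    ∃ u hu, (⟨R u, hu⟩ : A.domain) = v :=
  ⟨_, (hR.1 _).1, Subtype.ext (hR.2 v)⟩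

lemma IsResolventAt.exists_mem_domain_of_eq (hR : IsResolventAt A z R) {w u : H}
    (hw : w = R u) : ∃ h : w ∈ A.domain, z • w - A ⟨w, h⟩ = u := by
  subst hw
  exact hR.1 u

end Resolvent

theorem statement_8_general
    {H h1 h2 h22 : Type*}
    [NormedAddCommGroup H] [InnerProductSpace ℂ H] [CompleteSpace H]
    [NormedAddCommGroup h1] [InnerProductSpace ℂ h1] [CompleteSpace h1]
    [NormedAddCommGroup h2] [InnerProductSpace ℂ h2] [CompleteSpace h2]
    [NormedAddCommGroup h22] [InnerProductSpace ℂ h22]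
    (A : H →ₗ.[ℂ] H)
    (R : ℂ → H →L[ℂ] H) (ρA : Set ℂ)
    (hρAres : ∀ z ∈ ρA, IsResolventAt A z (R z))
    (hρAconj : ∀ z ∈ ρA, conj z ∈ ρA)
    (τ₁ : A.domain →ₗ[ℂ] h1) (τ₂ : A.domain →ₗ[ℂ] h2)
    (T : ℂ → H →L[ℂ] WithLp 2 (h1 × h2))
    (hT : ∀ z ∈ ρA, ∀ (u : H) (hu : R z u ∈ A.domain),
      T z u = pairL2 (τ₁ ⟨R z u, hu⟩) (τ₂ ⟨R z u, hu⟩))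
    (G : ℂ → WithLp 2 (h1 × h2) →L[ℂ] H)
    (hG : ∀ z ∈ ρA, G z = (T (conj z)).adjoint)
    (N : ℂ → WithLp 2 (h1 × h2) →L[ℂ] WithLp 2 (h1 × h2))
    (B₀ : h2 →L[ℂ] h22) (B₁ : h1 →L[ℂ] h1) (B₂ : h2 →L[ℂ] h22)
    (Minv : ℂ → WithLp 2 (h1 × h22) →L[ℂ] WithLp 2 (h1 × h2))
    (ZB : Set ℂ)
    (hZB : ZB = {z ∈ ρA | ∀ w ∈ ({z, conj z} : Set ℂ),
      (Minv w).comp (blockDiag (1 : h1 →L[ℂ] h1) B₀ - (blockDiag B₁ B₂).comp (N w)) = 1 ∧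
      (blockDiag (1 : h1 →L[ℂ] h1) B₀ - (blockDiag B₁ B₂).comp (N w)).comp (Minv w) = 1})
    (AB : H →ₗ.[ℂ] H)
    (hABres : ∀ z ∈ ZB, IsResolventAt AB z
      (R z + ((G z).comp ((Minv z).comp (blockDiag B₁ B₂))).comp ((G (conj z)).adjoint)))
    (P1 : h1 →L[ℂ] h1) (hP1sa : IsSelfAdjoint P1)
    (hP1fix : ∀ y ∈ closure (Set.range fun x : A.domain => τ₁ x), P1 y = y)
    (ρB : AB.domain →ₗ[ℂ] WithLp 2 (h1 × h2))
    (hρB : ∀ z ∈ ZB, ∀ (u : H)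
      (hu : (R z + ((G z).comp ((Minv z).comp (blockDiag B₁ B₂))).comp
        ((G (conj z)).adjoint)) u ∈ AB.domain),
      ρB ⟨(R z + ((G z).comp ((Minv z).comp (blockDiag B₁ B₂))).comp
        ((G (conj z)).adjoint)) u, hu⟩
        = blockDiag P1 (1 : h2 →L[ℂ] h2)
            ((Minv z) ((blockDiag B₁ B₂) ((G (conj z)).adjoint u))))
    (τe : AB.domain →ₗ[ℂ] WithLp 2 (h1 × h2))
    (hτe : ∀ z ∈ ZB, ∀ (u : H)
      (hu : (R z + ((G z).comp ((Minv z).comp (blockDiag B₁ B₂))).comp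
        ((G (conj z)).adjoint)) u ∈ AB.domain),
      τe ⟨(R z + ((G z).comp ((Minv z).comp (blockDiag B₁ B₂))).comp
        ((G (conj z)).adjoint)) u, hu⟩
        = T z u + N z ((Minv z) ((blockDiag B₁ B₂) ((G (conj z)).adjoint u))))
    :
    ∀ z ∈ ZB,
      ((AB.domain : Set H)
          = {u : H | ∃ hu : u ∈ AB.domain, (u - G z (ρB ⟨u, hu⟩)) ∈ A.domain}) ∧
      (∀ v : AB.domain, ∃ h : ((v : H) - G z (ρB v)) ∈ A.domain,
        z • (v : H) - AB v
          = z • ((v : H) - G z (ρB v)) - A ⟨(v : H) - G z (ρB v), h⟩) ∧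
      (∀ v : AB.domain,
        blockDiag (P1.comp B₁) B₂ (τe v)
          = blockDiag (1 : h1 →L[ℂ] h1) B₀ (ρB v)) := by
  intro z hz
  obtain ⟨hzA, hMinv⟩ := hZB ▸ hz
  have hzA' := hρAconj z hzA
  have hTz : (G (conj z)).adjoint = T z := by
    rw [hG _ hzA', Complex.conj_conj, ContinuousLinearMap.adjoint_adjoint]
  have hGz : (G z).comp (blockDiag P1 1) = G z := by
    rw [hG z hzA]
    refine ContinuousLinearMap.adjoint_comp_eq_of_comp_eq
      (isSelfAdjoint_blockDiag hP1sa (.one _)) (ContinuousLinearMap.ext fun u => ?_)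
    obtain ⟨hu, -⟩ := (hρAres _ hzA').1 u
    rw [ContinuousLinearMap.comp_apply, hT _ hzA' u hu, blockDiag_pairL2,
      hP1fix _ (subset_closure ⟨_, rfl⟩), one_apply_eq_self]
  have hRB := hABres z hz
  have hdom : ∀ v : AB.domain, ∃ h : ((v : H) - G z (ρB v)) ∈ A.domain,
      z • (v : H) - AB v = z • ((v : H) - G z (ρB v)) - A ⟨(v : H) - G z (ρB v), h⟩ := by
    intro v
    obtain ⟨u, hu, rfl⟩ := hRB.exists_eq_apply v
    refine Exists.imp (fun h hA => ?_) ((hρAres z hzA).exists_mem_domain_of_eq (u := u) ?_)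
    · rw [hA, hRB.sub_apply_eq]
    · rw [hρB z hz u hu, ← ContinuousLinearMap.comp_apply (G z), hGz]
      simp
  refine ⟨?_, hdom, fun v => ?_⟩
  · ext u
    exact ⟨fun hu => ⟨hu, (hdom ⟨u, hu⟩).1⟩, fun ⟨hu, _⟩ => hu⟩
  · obtain ⟨u, hu, rfl⟩ := hRB.exists_eq_apply v
    rw [hτe z hz u hu, hρB z hz u hu, hTz]
    exact blockDiag_boundary_condition (hMinv z (Set.mem_insert _ _)).2 _

/-- **abstract boundary conditions.** For the self-adjoint operator `A_B` of the
Kreĭn formula and any `z ∈ ρ(A_B) ∩ ρ(A)`: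
`dom A_B = {u : u − G_z ρ_B u ∈ dom A}`, `(−A_B + z) u = (−A + z)(u − G_z ρ_B u)`, and every
`u ∈ dom A_B` satisfies `(π₁* B₁ ⊕ B₂) τ u = (1 ⊕ B₀) ρ_B u` (with `τ` the extended trace). -/
theorem statement_8
    {H h1 h2 h22 : Type*}
    [NormedAddCommGroup H] [InnerProductSpace ℂ H] [CompleteSpace H]
    [NormedAddCommGroup h1] [InnerProductSpace ℂ h1] [CompleteSpace h1]
    [NormedAddCommGroup h2] [InnerProductSpace ℂ h2] [CompleteSpace h2]
    [NormedAddCommGroup h22] [InnerProductSpace ℂ h22] [CompleteSpace h22]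
    (A : H →ₗ.[ℂ] H) (hA : IsSelfAdjoint A)
    (R : ℂ → H →L[ℂ] H) (ρA : Set ℂ)
    (hρA : ρA = {z : ℂ | ∃ Q : H →L[ℂ] H, IsResolventAt A z Q})
    (hρAres : ∀ z ∈ ρA, IsResolventAt A z (R z))
    (hρAconj : ∀ z ∈ ρA, conj z ∈ ρA)
    (τ₁ : A.domain →ₗ[ℂ] h1) (τ₂ : A.domain →ₗ[ℂ] h2)
    (hτbdd : ∃ C : ℝ, ∀ x : A.domain, ‖τ₁ x‖ + ‖τ₂ x‖ ≤ C * (‖(x : H)‖ + ‖A x‖))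
    (hker₂ : Dense {u : H | ∃ hu : u ∈ A.domain, τ₂ ⟨u, hu⟩ = 0})
    (hran₂ : DenseRange τ₂)
    (T : ℂ → H →L[ℂ] WithLp 2 (h1 × h2))
    (hT : ∀ z ∈ ρA, ∀ (u : H) (hu : R z u ∈ A.domain),
      T z u = pairL2 (τ₁ ⟨R z u, hu⟩) (τ₂ ⟨R z u, hu⟩))
    (G : ℂ → WithLp 2 (h1 × h2) →L[ℂ] H)
    (hG : ∀ z ∈ ρA, G z = (T (conj z)).adjoint)
    (N : ℂ → WithLp 2 (h1 × h2) →L[ℂ] WithLp 2 (h1 × h2))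
    (hNext : ∀ z ∈ ρA, ∀ (φ : WithLp 2 (h1 × h2)) (hφ : G z φ ∈ A.domain),
      N z φ = pairL2 (τ₁ ⟨G z φ, hφ⟩) (τ₂ ⟨G z φ, hφ⟩))
    (hNadj : ∀ z ∈ ρA, (N z).adjoint = N (conj z))
    (hNdiff : ∀ z ∈ ρA, ∀ w ∈ ρA,
      N w - N z = (z - w) • (((G (conj w)).adjoint).comp (G z)))
    (B₀ : h2 →L[ℂ] h22) (B₁ : h1 →L[ℂ] h1) (B₂ : h2 →L[ℂ] h22)
    (hB₁ : IsSelfAdjoint B₁) (hB₀₂ : B₀.comp B₂.adjoint = B₂.comp B₀.adjoint)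
    (Minv : ℂ → WithLp 2 (h1 × h22) →L[ℂ] WithLp 2 (h1 × h2))
    (ZB : Set ℂ)
    (hZB : ZB = {z ∈ ρA | ∀ w ∈ ({z, conj z} : Set ℂ),
      (Minv w).comp (blockDiag (1 : h1 →L[ℂ] h1) B₀ - (blockDiag B₁ B₂).comp (N w)) = 1 ∧
      (blockDiag (1 : h1 →L[ℂ] h1) B₀ - (blockDiag B₁ B₂).comp (N w)).comp (Minv w) = 1})
    (hZBne : ZB.Nonempty)
    (AB : H →ₗ.[ℂ] H) (hAB : IsSelfAdjoint AB)
    (hABres : ∀ z ∈ ZB, IsResolventAt AB z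
      (R z + ((G z).comp ((Minv z).comp (blockDiag B₁ B₂))).comp ((G (conj z)).adjoint)))
    (P1 : h1 →L[ℂ] h1) (hP1sa : IsSelfAdjoint P1) (hP1idem : P1.comp P1 = P1)
    (hP1mem : ∀ y : h1, P1 y ∈ closure (Set.range fun x : A.domain => τ₁ x))
    (hP1fix : ∀ y ∈ closure (Set.range fun x : A.domain => τ₁ x), P1 y = y)
    (ρB : AB.domain →ₗ[ℂ] WithLp 2 (h1 × h2))
    (hρB : ∀ z ∈ ZB, ∀ (u : H)
      (hu : (R z + ((G z).comp ((Minv z).comp (blockDiag B₁ B₂))).comp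
        ((G (conj z)).adjoint)) u ∈ AB.domain),
      ρB ⟨(R z + ((G z).comp ((Minv z).comp (blockDiag B₁ B₂))).comp
        ((G (conj z)).adjoint)) u, hu⟩
        = blockDiag P1 (1 : h2 →L[ℂ] h2)
            ((Minv z) ((blockDiag B₁ B₂) ((G (conj z)).adjoint u))))
    (τe : AB.domain →ₗ[ℂ] WithLp 2 (h1 × h2))
    (hτe : ∀ z ∈ ZB, ∀ (u : H)
      (hu : (R z + ((G z).comp ((Minv z).comp (blockDiag B₁ B₂))).comp
        ((G (conj z)).adjoint)) u ∈ AB.domain),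
      τe ⟨(R z + ((G z).comp ((Minv z).comp (blockDiag B₁ B₂))).comp
        ((G (conj z)).adjoint)) u, hu⟩
        = T z u + N z ((Minv z) ((blockDiag B₁ B₂) ((G (conj z)).adjoint u))))
    :
    ∀ z ∈ ZB,
      ((AB.domain : Set H)
          = {u : H | ∃ hu : u ∈ AB.domain, (u - G z (ρB ⟨u, hu⟩)) ∈ A.domain}) ∧
      (∀ v : AB.domain, ∃ h : ((v : H) - G z (ρB v)) ∈ A.domain,
        z • (v : H) - AB v
          = z • ((v : H) - G z (ρB v)) - A ⟨(v : H) - G z (ρB v), h⟩) ∧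
      (∀ v : AB.domain,
        blockDiag (P1.comp B₁) B₂ (τe v)
          = blockDiag (1 : h1 →L[ℂ] h1) B₀ (ρB v)) :=
  statement_8_general A R ρA hρAres hρAconj τ₁ τ₂ T hT G hG N B₀ B₁ B₂ Minv ZB hZB AB hABres P1
    hP1sa hP1fix ρB hρB τe hτe
end
end

section
/- Alternative resolvent formula: under the abstract hypotheses and assuming the set Ẑ_B is nonempty, for any z ∈ ρ(A_B) ∩ ρ(A_{B₁}) one has R_z^B = R_z^{B₁} + G_z^{B₁} Λ̂_z^B (G_{z̄}^{B₁})*, where R_z^{B₁} = R_z + G¹_z Λ_z^{B₁} (G¹_{z̄})* is the resolvent of A_{B₁}, G_z^{B₁} := (τ₂ R_{z̄}^{B₁})* = G²_z + G¹_z Λ_z^{B₁} τ₁ G²_z, and Λ̂_z^B := (B₀ − B₂τ₂G_z^{B₁})⁻¹B₂. -/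
/-!
The Kreĭn matrix `M_z^B = (1 ⊕ B₀) − (B₁ ⊕ B₂)τG_z` is a 2 × 2 block operator whose `(1,1)` entry
`1 − B₁τ₁G¹_z` is invertible and whose Schur complement is `M̂_z^B = B₀ − B₂τ₂G_z^{B₁}`. The Schur
complement formula therefore gives, with `Λ = Λ_z^{B₁}` and `Λ̂ = Λ̂_z^B`,
`Λ_z^B = [[Λ + Λ τ₁G²_z Λ̂ τ₂G¹_z Λ, Λ τ₁G²_z Λ̂], [Λ̂ τ₂G¹_z Λ, Λ̂]]`.
Since `(Λ_{z̄}^{B₁})* = Λ_z^{B₁}` and `(τ₁G²_{z̄})* = τ₂G¹_z`, we get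
`(G_{z̄}^{B₁})* = (G²_{z̄})* + τ₂G¹_z Λ (G¹_{z̄})*`, and both sides of the resolvent formula expand
to the same six terms.
-/

open ComplexConjugate
noncomputable section

/-- The full block operator `[[a, b], [c, d]]` on the Hilbertian direct sum. -/
def blockFull {h1 h2 : Type*}
    [NormedAddCommGroup h1] [InnerProductSpace ℂ h1]
    [NormedAddCommGroup h2] [InnerProductSpace ℂ h2]
    (a : h1 →L[ℂ] h1) (b : h2 →L[ℂ] h1) (c : h1 →L[ℂ] h2) (d : h2 →L[ℂ] h2) :
    WithLp 2 (h1 × h2) →L[ℂ] WithLp 2 (h1 × h2) :=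
  ((WithLp.prodContinuousLinearEquiv 2 ℂ h1 h2).symm.toContinuousLinearMap.comp
      ((a.coprod b).prod (c.coprod d))).comp
    (WithLp.prodContinuousLinearEquiv 2 ℂ h1 h2).toContinuousLinearMap

/-- The row operator `[G¹, G²]` on the Hilbertian direct sum. -/
def coprodL2 {H h1 h2 : Type*}
    [NormedAddCommGroup H] [InnerProductSpace ℂ H]
    [NormedAddCommGroup h1] [InnerProductSpace ℂ h1]
    [NormedAddCommGroup h2] [InnerProductSpace ℂ h2]
    (F1 : h1 →L[ℂ] H) (F2 : h2 →L[ℂ] H) : WithLp 2 (h1 × h2) →L[ℂ] H :=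
  (F1.coprod F2).comp (WithLp.prodContinuousLinearEquiv 2 ℂ h1 h2).toContinuousLinearMap

theorem star_mul_eq_of_leftInverse_one_sub_mul {R : Type*} [Ring R] [StarRing R] {B s t X Y : R}
    (hB : IsSelfAdjoint B) (hst : star s = t) (hX : X * (1 - B * s) = 1)
    (hY : Y * (1 - B * t) = 1) :
    star (X * B) = Y * B := by
  have hX' : (1 - t * B) * star X = 1 := by
    simpa [star_mul, hB.star_eq, hst] using congrArg star hX
  calc star (X * B) = B * star X := by rw [star_mul, hB.star_eq]
    _ = Y * (1 - B * t) * (B * star X) := by rw [hY, one_mul]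
    _ = Y * B * ((1 - t * B) * star X) := by noncomm_ring
    _ = Y * B := by rw [hX', mul_one]

theorem ContinuousLinearMap.left_inv_eq_right_inv {R E F : Type*} [Semiring R]
    [TopologicalSpace E] [AddCommMonoid E] [Module R E]
    [TopologicalSpace F] [AddCommMonoid F] [Module R F]
    {f : E →L[R] F} {g h : F →L[R] E} (hg : g.comp f = 1) (hh : f.comp h = 1) : g = h :=
  calc g = g.comp (f.comp h) := by rw [hh]; rfl
    _ = h := by rw [← ContinuousLinearMap.comp_assoc, hg]; rfl

section BlockOp

variable {E₁ E₂ F₁ F₂ G₁ G₂ : Type*}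
  [NormedAddCommGroup E₁] [NormedSpace ℂ E₁] [NormedAddCommGroup E₂] [NormedSpace ℂ E₂]
  [NormedAddCommGroup F₁] [NormedSpace ℂ F₁] [NormedAddCommGroup F₂] [NormedSpace ℂ F₂]
  [NormedAddCommGroup G₁] [NormedSpace ℂ G₁] [NormedAddCommGroup G₂] [NormedSpace ℂ G₂]

def blockOp (a : E₁ →L[ℂ] F₁) (b : E₂ →L[ℂ] F₁) (c : E₁ →L[ℂ] F₂) (d : E₂ →L[ℂ] F₂) :
    WithLp 2 (E₁ × E₂) →L[ℂ] WithLp 2 (F₁ × F₂) :=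
  ((WithLp.prodContinuousLinearEquiv 2 ℂ F₁ F₂).symm.toContinuousLinearMap.comp
      ((a.coprod b).prod (c.coprod d))).comp
    (WithLp.prodContinuousLinearEquiv 2 ℂ E₁ E₂).toContinuousLinearMap

@[simp]
theorem blockOp_apply (a : E₁ →L[ℂ] F₁) (b : E₂ →L[ℂ] F₁) (c : E₁ →L[ℂ] F₂)
    (d : E₂ →L[ℂ] F₂) (x : WithLp 2 (E₁ × E₂)) :
    blockOp a b c d x = WithLp.toLp 2 (a x.fst + b x.snd, c x.fst + d x.snd) := rfl

theorem one_eq_blockOp :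
    (1 : WithLp 2 (E₁ × E₂) →L[ℂ] WithLp 2 (E₁ × E₂)) = blockOp 1 0 0 1 := by
  ext x : 1
  apply WithLp.ofLp_injective 2
  ext <;> simp

theorem blockOp_comp_blockOp (a : F₁ →L[ℂ] G₁) (b : F₂ →L[ℂ] G₁) (c : F₁ →L[ℂ] G₂)
    (d : F₂ →L[ℂ] G₂) (a' : E₁ →L[ℂ] F₁) (b' : E₂ →L[ℂ] F₁) (c' : E₁ →L[ℂ] F₂)
    (d' : E₂ →L[ℂ] F₂) :
    (blockOp a b c d).comp (blockOp a' b' c' d') =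
      blockOp (a.comp a' + b.comp c') (a.comp b' + b.comp d')
        (c.comp a' + d.comp c') (c.comp b' + d.comp d') := by
  ext x : 1
  apply WithLp.ofLp_injective 2
  ext <;> simp <;> abel

theorem blockOp_sub_blockOp (a a' : E₁ →L[ℂ] F₁) (b b' : E₂ →L[ℂ] F₁) (c c' : E₁ →L[ℂ] F₂)
    (d d' : E₂ →L[ℂ] F₂) :
    blockOp a b c d - blockOp a' b' c' d' = blockOp (a - a') (b - b') (c - c') (d - d') := by
  ext x : 1
  apply WithLp.ofLp_injective 2
  ext <;> simp <;> abel

theorem blockOp_comp_schur_eq_one {a : E₁ →L[ℂ] F₁} {b : E₂ →L[ℂ] F₁} {c : E₁ →L[ℂ] F₂}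
    {d : E₂ →L[ℂ] F₂} {a' : F₁ →L[ℂ] E₁} {s' : F₂ →L[ℂ] E₂} (ha : a.comp a' = 1)
    (hs : (d - c.comp (a'.comp b)).comp s' = 1) :
    (blockOp a b c d).comp
        (blockOp (a' + a'.comp (b.comp (s'.comp (c.comp a')))) (-a'.comp (b.comp s'))
          (-s'.comp (c.comp a')) s') = 1 := by
  have hs' : d.comp s' = 1 + ((c.comp a').comp b).comp s' := by
    rw [← hs]
    simp only [ContinuousLinearMap.sub_comp, ContinuousLinearMap.comp_assoc, sub_add_cancel]
  rw [blockOp_comp_blockOp, one_eq_blockOp]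
  simp only [ContinuousLinearMap.comp_add, ContinuousLinearMap.add_comp,
    ContinuousLinearMap.comp_neg, ← ContinuousLinearMap.comp_assoc, ha, hs',
    ContinuousLinearMap.one_def, ContinuousLinearMap.id_comp]
  congr 1 <;> abel

end BlockOp

section Hilbert

variable {H h₁ h₂ k₁ k₂ : Type*}
  [NormedAddCommGroup H] [InnerProductSpace ℂ H]
  [NormedAddCommGroup h₁] [InnerProductSpace ℂ h₁] [NormedAddCommGroup h₂] [InnerProductSpace ℂ h₂]
  [NormedAddCommGroup k₁] [InnerProductSpace ℂ k₁] [NormedAddCommGroup k₂] [InnerProductSpace ℂ k₂]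

theorem blockDiag_eq_blockOp (P : h₁ →L[ℂ] k₁) (Q : h₂ →L[ℂ] k₂) :
    blockDiag P Q = blockOp P 0 0 Q := by
  ext x : 1
  apply WithLp.ofLp_injective 2
  ext <;> simp [blockDiag]

theorem blockFull_eq_blockOp (a : h₁ →L[ℂ] h₁) (b : h₂ →L[ℂ] h₁) (c : h₁ →L[ℂ] h₂)
    (d : h₂ →L[ℂ] h₂) : blockFull a b c d = blockOp a b c d := rfl

theorem coprodL2_comp_blockOp (F₁ : k₁ →L[ℂ] H) (F₂ : k₂ →L[ℂ] H) (a : h₁ →L[ℂ] k₁)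
    (b : h₂ →L[ℂ] k₁) (c : h₁ →L[ℂ] k₂) (d : h₂ →L[ℂ] k₂) :
    (coprodL2 F₁ F₂).comp (blockOp a b c d) =
      coprodL2 (F₁.comp a + F₂.comp c) (F₁.comp b + F₂.comp d) := by
  ext x : 1
  simp [coprodL2]

theorem coprodL2_comp_adjoint_coprodL2 [CompleteSpace H] [CompleteSpace h₁] [CompleteSpace h₂]
    (F₁ G₁ : h₁ →L[ℂ] H) (F₂ G₂ : h₂ →L[ℂ] H) :
    (coprodL2 F₁ F₂).comp (coprodL2 G₁ G₂).adjoint =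
      F₁.comp G₁.adjoint + F₂.comp G₂.adjoint := by
  have hadj : (coprodL2 G₁ G₂).adjoint =
      (WithLp.prodContinuousLinearEquiv 2 ℂ h₁ h₂).symm.toContinuousLinearMap.comp
        (G₁.adjoint.prod G₂.adjoint) := by
    refine ((ContinuousLinearMap.eq_adjoint_iff _ _).2 fun x y => ?_).symm
    simp [coprodL2, WithLp.prod_inner_apply, ContinuousLinearMap.adjoint_inner_left,
      inner_add_right]
  rw [hadj]
  ext u : 1
  simp [coprodL2]

theorem leftInverse_comp_blockDiag_eq_blockOp {t₁₁ : h₁ →L[ℂ] h₁} {t₁₂ : h₂ →L[ℂ] h₁}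
    {t₂₁ : h₁ →L[ℂ] h₂} {t₂₂ : h₂ →L[ℂ] h₂} {B₀ B₂ : h₂ →L[ℂ] k₂} {B₁ : h₁ →L[ℂ] h₁}
    {M₁inv : h₁ →L[ℂ] h₁} {Minv : WithLp 2 (h₁ × k₂) →L[ℂ] WithLp 2 (h₁ × h₂)}
    {Sinv : k₂ →L[ℂ] h₂} (hM₁ : (1 - B₁.comp t₁₁).comp M₁inv = 1)
    (hSinv : (B₀ - B₂.comp (t₂₂ + t₂₁.comp ((M₁inv.comp B₁).comp t₁₂))).comp Sinv = 1)
    (hMinv : Minv.comp (blockDiag 1 B₀ - (blockDiag B₁ B₂).comp (blockFull t₁₁ t₁₂ t₂₁ t₂₂)) = 1) :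
    Minv.comp (blockDiag B₁ B₂) =
      blockOp
        (M₁inv.comp B₁ +
          (M₁inv.comp B₁).comp (t₁₂.comp ((Sinv.comp B₂).comp (t₂₁.comp (M₁inv.comp B₁)))))
        ((M₁inv.comp B₁).comp (t₁₂.comp (Sinv.comp B₂)))
        ((Sinv.comp B₂).comp (t₂₁.comp (M₁inv.comp B₁))) (Sinv.comp B₂) := by
  have hblock : blockDiag 1 B₀ - (blockDiag B₁ B₂).comp (blockFull t₁₁ t₁₂ t₂₁ t₂₂) =
      blockOp (1 - B₁.comp t₁₁) (-B₁.comp t₁₂) (-B₂.comp t₂₁) (B₀ - B₂.comp t₂₂) := by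
    rw [blockDiag_eq_blockOp, blockDiag_eq_blockOp, blockFull_eq_blockOp, blockOp_comp_blockOp,
      blockOp_sub_blockOp]
    congr 1 <;> simp
  have hschur : B₀ - B₂.comp t₂₂ - (-B₂.comp t₂₁).comp (M₁inv.comp (-B₁.comp t₁₂)) =
      B₀ - B₂.comp (t₂₂ + t₂₁.comp ((M₁inv.comp B₁).comp t₁₂)) := by
    simp only [ContinuousLinearMap.comp_add, ContinuousLinearMap.comp_neg,
      ContinuousLinearMap.neg_comp, ContinuousLinearMap.comp_assoc, neg_neg]
    abel
  have hright := blockOp_comp_schur_eq_one hM₁ (hschur ▸ hSinv)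
  rw [← hblock] at hright
  rw [ContinuousLinearMap.left_inv_eq_right_inv hMinv hright, blockDiag_eq_blockOp,
    blockOp_comp_blockOp]
  congr 1 <;> simp only [ContinuousLinearMap.add_comp, ContinuousLinearMap.comp_neg,
    ContinuousLinearMap.neg_comp, ContinuousLinearMap.comp_zero, ContinuousLinearMap.comp_assoc,
    neg_neg, add_zero, zero_add]

end Hilbert

-- `t11 z, t12 z, t21 z, t22 z` stand for `τ₁G¹_z, τ₁G²_z, τ₂G¹_z, τ₂G²_z`, and
-- `(Minv z).comp (blockDiag B₁ B₂)` is `Λ_z^B`.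
theorem statement_11_general {H h1 h2 h22 : Type*}
    [NormedAddCommGroup H] [InnerProductSpace ℂ H] [CompleteSpace H]
    [NormedAddCommGroup h1] [InnerProductSpace ℂ h1] [CompleteSpace h1]
    [NormedAddCommGroup h2] [InnerProductSpace ℂ h2] [CompleteSpace h2]
    [NormedAddCommGroup h22] [InnerProductSpace ℂ h22]
    (Z : Set ℂ) (hZconj : ∀ z ∈ Z, conj z ∈ Z)
    (R : ℂ → H →L[ℂ] H)
    (G1 : ℂ → h1 →L[ℂ] H) (G2 : ℂ → h2 →L[ℂ] H)
    (t11 : ℂ → h1 →L[ℂ] h1) (t12 : ℂ → h2 →L[ℂ] h1)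
    (t21 : ℂ → h1 →L[ℂ] h2) (t22 : ℂ → h2 →L[ℂ] h2)
    (hadj11 : ∀ z ∈ Z, (t11 z).adjoint = t11 (conj z))
    (hadj12 : ∀ z ∈ Z, (t12 z).adjoint = t21 (conj z))
    (B₀ : h2 →L[ℂ] h22) (B₁ : h1 →L[ℂ] h1) (B₂ : h2 →L[ℂ] h22)
    (hB₁ : IsSelfAdjoint B₁)
    -- bounded inverse of `M_z^{B₁} = 1 − B₁ τ₁G¹_z`
    (MB1inv : ℂ → h1 →L[ℂ] h1)
    (hMB1 : ∀ z ∈ Z, (MB1inv z).comp (1 - B₁.comp (t11 z)) = 1 ∧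
      (1 - B₁.comp (t11 z)).comp (MB1inv z) = 1)
    -- bounded inverse of the full `M_z^B = (1 ⊕ B₀) − (B₁ ⊕ B₂) τG_z`
    (Minv : ℂ → WithLp 2 (h1 × h22) →L[ℂ] WithLp 2 (h1 × h2))
    (hMinv : ∀ z ∈ Z,
      (Minv z).comp (blockDiag (1 : h1 →L[ℂ] h1) B₀ -
        (blockDiag B₁ B₂).comp (blockFull (t11 z) (t12 z) (t21 z) (t22 z))) = 1 ∧
      (blockDiag (1 : h1 →L[ℂ] h1) B₀ -
        (blockDiag B₁ B₂).comp (blockFull (t11 z) (t12 z) (t21 z) (t22 z))).comp (Minv z) = 1)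
    -- bounded inverse of `M̂_z^B = B₀ − B₂ τ₂ G_z^{B₁}`
    (Mhatinv : ℂ → h22 →L[ℂ] h2)
    (hMhat : ∀ z ∈ Z,
      (Mhatinv z).comp
        (B₀ - B₂.comp (t22 z + (t21 z).comp (((MB1inv z).comp B₁).comp (t12 z)))) = 1 ∧
      (B₀ - B₂.comp (t22 z + (t21 z).comp (((MB1inv z).comp B₁).comp (t12 z)))).comp
        (Mhatinv z) = 1) :
    ∀ z ∈ Z,
      R z + ((coprodL2 (G1 z) (G2 z)).comp ((Minv z).comp (blockDiag B₁ B₂))).comp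
          ((coprodL2 (G1 (conj z)) (G2 (conj z))).adjoint)
        = (R z + ((G1 z).comp ((MB1inv z).comp B₁)).comp ((G1 (conj z)).adjoint))
          + (((G2 z + ((G1 z).comp ((MB1inv z).comp B₁)).comp (t12 z)).comp
              ((Mhatinv z).comp B₂)).comp
            ((G2 (conj z) + ((G1 (conj z)).comp ((MB1inv (conj z)).comp B₁)).comp
              (t12 (conj z))).adjoint)) := by
  intro z hz
  have hz' : conj z ∈ Z := hZconj z hz
  have hΛ : ((MB1inv (conj z)).comp B₁).adjoint = (MB1inv z).comp B₁ :=
    star_mul_eq_of_leftInverse_one_sub_mul hB₁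
      (by rw [ContinuousLinearMap.star_eq_adjoint, hadj11 _ hz', Complex.conj_conj])
      (hMB1 (conj z) hz').1 (hMB1 z hz).1
  have hGadj : (G2 (conj z) + ((G1 (conj z)).comp ((MB1inv (conj z)).comp B₁)).comp
      (t12 (conj z))).adjoint =
      (G2 (conj z)).adjoint + ((t21 z).comp ((MB1inv z).comp B₁)).comp (G1 (conj z)).adjoint := by
    rw [map_add, ContinuousLinearMap.adjoint_comp, ContinuousLinearMap.adjoint_comp,
      hadj12 _ hz', Complex.conj_conj, hΛ]
    simp only [ContinuousLinearMap.comp_assoc]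
  rw [leftInverse_comp_blockDiag_eq_blockOp (hMB1 z hz).2 (hMhat z hz).2 (hMinv z hz).1,
    coprodL2_comp_blockOp, coprodL2_comp_adjoint_coprodL2, hGadj]
  simp only [ContinuousLinearMap.comp_add, ContinuousLinearMap.add_comp,
    ContinuousLinearMap.comp_assoc]
  abel

/-- **alternative resolvent formula.** Under the abstract Kreĭn hypotheses and
assuming the set `Ẑ_B` is nonempty (realized here by the set `Z` on which all the inverses
below exist), for any `z ∈ ρ(A_B) ∩ ρ(A_{B₁})` one has
`R_z^B = R_z^{B₁} + G_z^{B₁} Λ̂_z^B (G_{z̄}^{B₁})*`, where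
`R_z^{B₁} = R_z + G¹_z Λ_z^{B₁} (G¹_{z̄})*`, `Λ_z^{B₁} = (1 − B₁τ₁G¹_z)⁻¹B₁`,
`G_z^{B₁} = G²_z + G¹_z Λ_z^{B₁} τ₁G²_z`, `Λ̂_z^B = (B₀ − B₂τ₂G_z^{B₁})⁻¹B₂`, and
`R_z^B = R_z + G_z Λ_z^B G_{z̄}*` is the full Kreĭn resolvent with
`Λ_z^B = ((1 ⊕ B₀) − (B₁ ⊕ B₂)τG_z)⁻¹(B₁ ⊕ B₂)`.
Here `t11 z, t12 z, t21 z, t22 z` denote the extensions of `τ₁G¹_z, τ₁G²_z, τ₂G¹_z, τ₂G²_z`. -/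
theorem statement_11 {H h1 h2 h22 : Type*}
    [NormedAddCommGroup H] [InnerProductSpace ℂ H] [CompleteSpace H]
    [NormedAddCommGroup h1] [InnerProductSpace ℂ h1] [CompleteSpace h1]
    [NormedAddCommGroup h2] [InnerProductSpace ℂ h2] [CompleteSpace h2]
    [NormedAddCommGroup h22] [InnerProductSpace ℂ h22] [CompleteSpace h22]
    (A : H →ₗ.[ℂ] H) (hA : IsSelfAdjoint A)
    (Z : Set ℂ) (hZconj : ∀ z ∈ Z, conj z ∈ Z)
    (R : ℂ → H →L[ℂ] H) (hZres : ∀ z ∈ Z, IsResolventAt A z (R z))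
    (τ₁ : A.domain →ₗ[ℂ] h1) (τ₂ : A.domain →ₗ[ℂ] h2)
    (hτbdd : ∃ C : ℝ, ∀ x : A.domain, ‖τ₁ x‖ + ‖τ₂ x‖ ≤ C * (‖(x : H)‖ + ‖A x‖))
    (hker₂ : Dense {u : H | ∃ hu : u ∈ A.domain, τ₂ ⟨u, hu⟩ = 0})
    (hran₂ : DenseRange τ₂)
    (T1 : ℂ → H →L[ℂ] h1) (T2 : ℂ → H →L[ℂ] h2)
    (hT1 : ∀ z ∈ Z, ∀ (u : H) (hu : R z u ∈ A.domain), T1 z u = τ₁ ⟨R z u, hu⟩)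
    (hT2 : ∀ z ∈ Z, ∀ (u : H) (hu : R z u ∈ A.domain), T2 z u = τ₂ ⟨R z u, hu⟩)
    (G1 : ℂ → h1 →L[ℂ] H) (G2 : ℂ → h2 →L[ℂ] H)
    (hG1 : ∀ z ∈ Z, G1 z = (T1 (conj z)).adjoint)
    (hG2 : ∀ z ∈ Z, G2 z = (T2 (conj z)).adjoint)
    (t11 : ℂ → h1 →L[ℂ] h1) (t12 : ℂ → h2 →L[ℂ] h1)
    (t21 : ℂ → h1 →L[ℂ] h2) (t22 : ℂ → h2 →L[ℂ] h2)
    (hext11 : ∀ z ∈ Z, ∀ (φ : h1) (h : G1 z φ ∈ A.domain), t11 z φ = τ₁ ⟨G1 z φ, h⟩)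
    (hext12 : ∀ z ∈ Z, ∀ (φ : h2) (h : G2 z φ ∈ A.domain), t12 z φ = τ₁ ⟨G2 z φ, h⟩)
    (hext21 : ∀ z ∈ Z, ∀ (φ : h1) (h : G1 z φ ∈ A.domain), t21 z φ = τ₂ ⟨G1 z φ, h⟩)
    (hext22 : ∀ z ∈ Z, ∀ (φ : h2) (h : G2 z φ ∈ A.domain), t22 z φ = τ₂ ⟨G2 z φ, h⟩)
    (hadj11 : ∀ z ∈ Z, (t11 z).adjoint = t11 (conj z))
    (hadj12 : ∀ z ∈ Z, (t12 z).adjoint = t21 (conj z))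
    (hadj22 : ∀ z ∈ Z, (t22 z).adjoint = t22 (conj z))
    (B₀ : h2 →L[ℂ] h22) (B₁ : h1 →L[ℂ] h1) (B₂ : h2 →L[ℂ] h22)
    (hB₁ : IsSelfAdjoint B₁) (hB₀₂ : B₀.comp B₂.adjoint = B₂.comp B₀.adjoint)
    -- bounded inverse of `M_z^{B₁} = 1 − B₁ τ₁G¹_z`
    (MB1inv : ℂ → h1 →L[ℂ] h1)
    (hMB1 : ∀ z ∈ Z, (MB1inv z).comp (1 - B₁.comp (t11 z)) = 1 ∧
      (1 - B₁.comp (t11 z)).comp (MB1inv z) = 1)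
    -- bounded inverse of the full `M_z^B = (1 ⊕ B₀) − (B₁ ⊕ B₂) τG_z`
    (Minv : ℂ → WithLp 2 (h1 × h22) →L[ℂ] WithLp 2 (h1 × h2))
    (hMinv : ∀ z ∈ Z,
      (Minv z).comp (blockDiag (1 : h1 →L[ℂ] h1) B₀ -
        (blockDiag B₁ B₂).comp (blockFull (t11 z) (t12 z) (t21 z) (t22 z))) = 1 ∧
      (blockDiag (1 : h1 →L[ℂ] h1) B₀ -
        (blockDiag B₁ B₂).comp (blockFull (t11 z) (t12 z) (t21 z) (t22 z))).comp (Minv z) = 1)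
    -- bounded inverse of `M̂_z^B = B₀ − B₂ τ₂ G_z^{B₁}`
    (Mhatinv : ℂ → h22 →L[ℂ] h2)
    (hMhat : ∀ z ∈ Z,
      (Mhatinv z).comp
        (B₀ - B₂.comp (t22 z + (t21 z).comp (((MB1inv z).comp B₁).comp (t12 z)))) = 1 ∧
      (B₀ - B₂.comp (t22 z + (t21 z).comp (((MB1inv z).comp B₁).comp (t12 z)))).comp
        (Mhatinv z) = 1) :
    ∀ z ∈ Z,
      R z + ((coprodL2 (G1 z) (G2 z)).comp ((Minv z).comp (blockDiag B₁ B₂))).comp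
          ((coprodL2 (G1 (conj z)) (G2 (conj z))).adjoint)
        = (R z + ((G1 z).comp ((MB1inv z).comp B₁)).comp ((G1 (conj z)).adjoint))
          + (((G2 z + ((G1 z).comp ((MB1inv z).comp B₁)).comp (t12 z)).comp
              ((Mhatinv z).comp B₂)).comp
            ((G2 (conj z) + ((G1 (conj z)).comp ((MB1inv (conj z)).comp B₁)).comp
              (t12 (conj z))).adjoint)) :=
  statement_11_general Z hZconj R G1 G2 t11 t12 t21 t22 hadj11 hadj12 B₀ B₁ B₂ hB₁ MB1inv hMB1 Minv
    hMinv Mhatinv hMhat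
end
end
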